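/- If W_1,…,W_N : X → X are contraction maps on a complete metric space X with contraction constants s_1,…,s_N ∈ [0,1), then the Hutchinson operator W(B) = ⋃_{n=1}^N W_n(B) is a contraction on the space H(X) of nonempty compact subsets with the Hausdorff metric, with contraction constant s = max{s_1,…,s_N}. -/

import Mathlib

open Metric Set

/-- The Hutchinson operator of finitely many contractions is a contraction on
nonempty compact sets with respect to the Hausdorff distance, with contraction
constant `max {s_1, …, s_N}`. -/
theorem stmt_1 {X : Type*} [MetricSpace X] [CompleteSpace X]
    (N : ℕ) (hN : 0 < N) (W : Fin N → X → X) (s : Fin N → ℝ)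
    (hs0 : ∀ n, 0 ≤ s n) (hs1 : ∀ n, s n < 1)
    (hW : ∀ n x y, dist (W n x) (W n y) ≤ s n * dist x y)
    (A B : Set X) (hA : IsCompact A) (hAne : A.Nonempty)
    (hB : IsCompact B) (hBne : B.Nonempty) :
    hausdorffDist (⋃ n, W n '' A) (⋃ n, W n '' B) ≤
      (Finset.univ.sup' (Finset.univ_nonempty_iff.mpr ⟨⟨0, hN⟩⟩) s) * hausdorffDist A B := by
  set S := Finset.univ.sup' (Finset.univ_nonempty_iff.mpr ⟨⟨0, hN⟩⟩) s with hS
  have hS0 : 0 ≤ S := le_trans (hs0 ⟨0, hN⟩) (Finset.le_sup' s (Finset.mem_univ _))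
  have hSn : ∀ n, s n ≤ S := fun n => Finset.le_sup' s (Finset.mem_univ n)
  have hne : EMetric.hausdorffEdist A B ≠ ⊤ :=
    hausdorffEdist_ne_top_of_nonempty_of_bounded hAne hBne hA.isBounded hB.isBounded
  have key : ∀ (C D : Set X), IsCompact D → D.Nonempty →
      EMetric.hausdorffEdist C D ≠ ⊤ →
      ∀ x ∈ ⋃ n, W n '' C, ∃ y ∈ ⋃ n, W n '' D, dist x y ≤ S * hausdorffDist C D := by
    intro C D hD hDne hCD x hx
    obtain ⟨n, a, ha, rfl⟩ := by simpa using hx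
    obtain ⟨b, hb, hdb⟩ := hD.exists_infDist_eq_dist hDne a
    refine ⟨W n b, mem_iUnion.2 ⟨n, mem_image_of_mem _ hb⟩, ?_⟩
    calc dist (W n a) (W n b) ≤ s n * dist a b := hW n a b
      _ ≤ S * hausdorffDist C D := by
          apply mul_le_mul (hSn n) ?_ dist_nonneg hS0
          rw [← hdb]
          exact infDist_le_hausdorffDist_of_mem ha hCD
  exact hausdorffDist_le_of_mem_dist (mul_nonneg hS0 hausdorffDist_nonneg)
    (key A B hB hBne hne)
    (by simpa [hausdorffDist_comm] using
      key B A hA hAne (by show hausdorffEDist B A ≠ ⊤; rwa [EMetric.hausdorffEdist_comm]))
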